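/- A single step of parallel evolution modulo equivalence decomposes as splits, then one parallel evolution, then flip/join steps: the relations ≈ ∘ ⇒_P ∘ ≈ and S* ∘ ⇒_P ∘ (FJ)* coincide. -/

import Mathlib

open Relation
open scoped NNReal

abbrev PDist (A : Type) := List (ℝ≥0 × A)

namespace PPARS

variable {A X : Type}

/-- Total weight of a list distribution. -/
def weight (D : PDist A) : ℝ≥0 := (D.map Prod.fst).sum

/-- Scale every weight of a distribution by `α`. -/
def scale (α : ℝ≥0) (D : PDist A) : PDist A := D.map (fun pa => (α * pa.1, pa.2))

open Classical in
/-- Total weight that `D` assigns to the element `a`. -/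
noncomputable def wt (D : PDist A) (a : A) : ℝ≥0 :=
  (D.map (fun pa => if pa.2 = a then pa.1 else 0)).sum

/-- The Flip rule, closed under list contexts. -/
inductive FlipS : PDist A → PDist A → Prop
  | mk (E₁ E₂ : PDist A) (p q : ℝ≥0) (a b : A) :
      FlipS (E₁ ++ [(p,a),(q,b)] ++ E₂) (E₁ ++ [(q,b),(p,a)] ++ E₂)

/-- The Join rule, closed under list contexts. -/
inductive JoinS : PDist A → PDist A → Prop
  | mk (E₁ E₂ : PDist A) (p q : ℝ≥0) (a : A) :
      JoinS (E₁ ++ [(p,a),(q,a)] ++ E₂) (E₁ ++ [(p+q,a)] ++ E₂)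

/-- The Split rule, closed under list contexts. -/
inductive SplitS : PDist A → PDist A → Prop
  | mk (E₁ E₂ : PDist A) (p q : ℝ≥0) (a : A) :
      SplitS (E₁ ++ [(p+q,a)] ++ E₂) (E₁ ++ [(p,a),(q,a)] ++ E₂)

/-- One `∼`-step: congruence closure of Flip, Join and Split. -/
def SimStep (D E : PDist A) : Prop := FlipS D E ∨ JoinS D E ∨ SplitS D E

/-- One Flip-or-Join step. -/
def FJ (D E : PDist A) : Prop := FlipS D E ∨ JoinS D E

/-- Distribution equivalence `≈`. -/
def DEquiv : PDist A → PDist A → Prop := ReflTransGen SimStep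

/-- Parallel evolution `⇒_P` for a PARS relation `R`. -/
inductive PEvol (R : A → PDist A → Prop) : PDist A → PDist A → Prop
  | nil : PEvol R [] []
  | keep {ds ds' : PDist A} (p : ℝ≥0) (a : A) :
      PEvol R ds ds' → PEvol R ((p,a) :: ds) ((p,a) :: ds')
  | evolve {a : A} {D ds ds' : PDist A} (p : ℝ≥0) :
      R a D → PEvol R ds ds' → PEvol R ((p,a) :: ds) (scale p D ++ ds')

/-- Proper parallel evolution `⇒_P¹`: at least one element evolves. -/
inductive PEvol1 (R : A → PDist A → Prop) : PDist A → PDist A → Prop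
  | evolve {a : A} {D ds ds' : PDist A} (p : ℝ≥0) :
      R a D → PEvol R ds ds' → PEvol1 R ((p,a) :: ds) (scale p D ++ ds')
  | keep {ds ds' : PDist A} (p : ℝ≥0) (a : A) :
      PEvol1 R ds ds' → PEvol1 R ((p,a) :: ds) ((p,a) :: ds')

/-- The determinisation relation `↠ = ⇒_P ∪ ≈`. -/
def Red (R : A → PDist A → Prop) (D E : PDist A) : Prop := PEvol R D E ∨ DEquiv D E

/-- `R` defines a PARS: successor distributions are normalised. -/
def IsPARS (R : A → PDist A → Prop) : Prop := ∀ a D, R a D → weight D = 1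

/-- A terminal element has no successor distribution. -/
def Terminal (R : A → PDist A → Prop) (a : A) : Prop := ∀ D, ¬ R a D

/-- A terminal distribution contains only terminal elements. -/
def TerminalD (R : A → PDist A → Prop) (D : PDist A) : Prop := ∀ pa ∈ D, Terminal R pa.2

/-- Classical confluence of a relation. -/
def Confluent (r : X → X → Prop) : Prop :=
  ∀ a b c, ReflTransGen r a b → ReflTransGen r a c →
    ∃ d, ReflTransGen r b d ∧ ReflTransGen r c d

/-- Raw (finite) computation trees. -/
inductive CTree (A : Type) where
  | leaf (a : A)
  | node (a : A) (cs : List (ℝ≥0 × CTree A))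

def CTree.root : CTree A → A
  | .leaf a => a
  | .node a _ => a

/-- `IsTree R t a`: `t` is a computation tree of the PARS `R` with root `a`. -/
inductive IsTree (R : A → PDist A → Prop) : CTree A → A → Prop
  | leaf (a : A) : IsTree R (.leaf a) a
  | node (a : A) (cs : List (ℝ≥0 × CTree A)) :
      R a (cs.map fun x => (x.1, x.2.root)) →
      (∀ x ∈ cs, IsTree R x.2 x.2.root) →
      IsTree R (.node a cs) a

mutual
/-- Support of a computation tree. -/
def supp : CTree A → PDist A
  | .leaf a => [(1, a)]
  | .node _ cs => suppL cs
def suppL : List (ℝ≥0 × CTree A) → PDist A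
  | [] => []
  | (p, t) :: ts => scale p (supp t) ++ suppL ts
end

/-- A tree is maximal when all its leaves are terminal elements. -/
inductive MaximalT (R : A → PDist A → Prop) : CTree A → Prop
  | leaf (a : A) : Terminal R a → MaximalT R (.leaf a)
  | node (a : A) (cs : List (ℝ≥0 × CTree A)) :
      (∀ x ∈ cs, MaximalT R x.2) → MaximalT R (.node a cs)

end PPARS


namespace PPARS
variable {A X : Type}

/-- `R` modulo `≈`: an equivalence step, then `r`, then an equivalence step. -/
def ModE (r : PDist A → PDist A → Prop) : PDist A → PDist A → Prop :=
  Relation.Comp DEquiv (Relation.Comp r DEquiv)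

/-- `n`-fold composition of a relation. -/
def npow (r : X → X → Prop) : ℕ → X → X → Prop
  | 0 => Eq
  | n+1 => Relation.Comp r (npow r n)

/-- A local relation on distributions. -/
def LocalRel (r : PDist A → PDist A → Prop) : Prop :=
  ∀ (α β : ℝ≥0) (D₁ D₂ E : PDist A), r (scale α D₁ ++ scale β D₂) E →
    ∃ E₁ E₂, E = scale α E₁ ++ scale β E₂ ∧ r D₁ E₁ ∧ r D₂ E₂

/-- A compositional relation on distributions. -/
def Compositional (r : PDist A → PDist A → Prop) : Prop :=
  ∀ (α β : ℝ≥0) (D₁ E₁ D₂ E₂ : PDist A), r D₁ E₁ → r D₂ E₂ →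
    r (scale α D₁ ++ scale β D₂) (scale α E₁ ++ scale β E₂)

/-- `(γ, δ)` closes `(α, β)` on `D`. -/
def Closes (γ δ α β : PDist A → PDist A → Prop) (D : PDist A) : Prop :=
  ∀ E F, α D E → β D F → ∃ C, γ E C ∧ δ F C

open Classical in
/-- Liveness: total weight assigned to non-terminal elements. -/
noncomputable def liv (R : A → PDist A → Prop) (D : PDist A) : ℝ≥0 :=
  (D.map (fun pa => if Terminal R pa.2 then 0 else pa.1)).sum

/-- L¹ distance between mathematical distributions. -/
noncomputable def fdist (f g : A → ℝ≥0) : ℝ := ∑' a : A, |(f a : ℝ) - (g a : ℝ)|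

/-- L¹ distance between the mathematical distributions induced by two list
distributions. -/
noncomputable def ldist (D E : PDist A) : ℝ := fdist (wt D) (wt E)

end PPARS


/-!
Splits can be moved to the front and flips and joins to the back. A flip or join followed by a
split, or by a parallel evolution, can be reordered as the split (evolution) followed by flips
and joins: away from the rewritten entries the steps commute, a split of a joined weight
`p + q = s + t` is resolved by a common refinement of the two decompositions, and the evolved
images of flipped or joined entries are reassembled by permuting and joining the scaled blocks.
A split after a parallel evolution is pulled back before it: a split entry `p * r = s + t` of an
evolved block `scale p C` comes from splitting `p` in the ratio `s : t` and evolving both halves.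
Hence `≈ = S* ∘ (FJ)*`, and `S* ∘ (FJ)* ∘ ⇒_P ∘ S* ∘ (FJ)*` collapses to `S* ∘ ⇒_P ∘ (FJ)*`.
-/

namespace Relation

variable {α : Type*} {r s : α → α → Prop}

theorem ReflTransGen.postpone (h : ∀ a b c, r a b → s b c → ∃ d, s a d ∧ ReflTransGen r d c)
    {a b c : α} (hab : ReflTransGen r a b) (hbc : s b c) :
    ∃ d, s a d ∧ ReflTransGen r d c := by
  induction hab using ReflTransGen.head_induction_on with
  | refl => exact ⟨c, hbc, .refl⟩
  | head hstep _ ih =>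
    obtain ⟨d₁, hs₁, hr₁⟩ := ih
    obtain ⟨d, hs, hr⟩ := h _ _ _ hstep hs₁
    exact ⟨d, hs, hr.trans hr₁⟩

theorem ReflTransGen.postpone_reflTransGen
    (h : ∀ a b c, r a b → s b c → ∃ d, s a d ∧ ReflTransGen r d c)
    {a b c : α} (hab : ReflTransGen r a b) (hbc : ReflTransGen s b c) :
    ∃ d, ReflTransGen s a d ∧ ReflTransGen r d c := by
  induction hbc using ReflTransGen.head_induction_on generalizing a with
  | refl => exact ⟨a, .refl, hab⟩
  | head hstep _ ih =>
    obtain ⟨d₁, hs₁, hr₁⟩ := hab.postpone h hstep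
    obtain ⟨d, hs, hr⟩ := ih hr₁
    exact ⟨d, hs.head hs₁, hr⟩

theorem ReflTransGen.exists_of_or_of_postpone
    (h : ∀ a b c, r a b → s b c → ∃ d, s a d ∧ ReflTransGen r d c)
    {a b : α} (hab : ReflTransGen (fun x y => r x y ∨ s x y) a b) :
    ∃ d, ReflTransGen s a d ∧ ReflTransGen r d b := by
  induction hab with
  | refl => exact ⟨a, .refl, .refl⟩
  | tail _ hstep ih =>
    obtain ⟨d, hs, hr⟩ := ih
    rcases hstep with hr' | hs'
    · exact ⟨d, hs, hr.tail hr'⟩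
    · obtain ⟨e, hse, hre⟩ := hr.postpone h hs'
      exact ⟨e, hs.tail hse, hre⟩

end Relation

theorem exists_eq_add_and_eq_add_or_exists_eq_add_and_eq_add {M : Type*}
    [AddCancelCommMonoid M] [LinearOrder M] [CanonicallyOrderedAdd M] {p q s t : M}
    (h : p + q = s + t) :
    (∃ r, p = s + r ∧ t = r + q) ∨ (∃ r, s = p + r ∧ q = r + t) := by
  rcases le_total s p with hsp | hps
  · obtain ⟨r, rfl⟩ := le_iff_exists_add.mp hsp
    exact Or.inl ⟨r, rfl, add_left_cancel (a := s) (by rw [← h, add_assoc])⟩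
  · obtain ⟨r, rfl⟩ := le_iff_exists_add.mp hps
    exact Or.inr ⟨r, rfl, add_left_cancel (a := p) (by rw [h, add_assoc])⟩

theorem exists_add_of_mul_eq_add {K : Type*} [Semifield K] [PartialOrder K]
    [CanonicallyOrderedAdd K] {p r s t : K} (h : p * r = s + t) :
    ∃ p₁ p₂, p = p₁ + p₂ ∧ p₁ * r = s ∧ p₂ * r = t := by
  by_cases hr : r = 0
  · obtain ⟨rfl, rfl⟩ := add_eq_zero.mp (by rw [← h, hr, mul_zero])
    exact ⟨p, 0, (add_zero p).symm, by rw [hr, mul_zero], zero_mul r⟩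
  · refine ⟨s / r, t / r, ?_, div_mul_cancel₀ s hr, div_mul_cancel₀ t hr⟩
    rw [← add_div, ← h, mul_div_cancel_right₀ p hr]

theorem List.append_cons_append_append_cons_perm {α : Type*} (A₁ A₂ B₁ B₂ : List α)
    (x₁ x₂ : α) :
    ((A₁ ++ x₁ :: B₁) ++ (A₂ ++ x₂ :: B₂)).Perm ((A₁ ++ A₂) ++ x₁ :: x₂ :: (B₁ ++ B₂)) := by
  classical
  rw [List.perm_iff_count]
  intro a
  simp only [List.count_append, List.count_cons]
  omega

namespace PPARS

open Relation

variable {A : Type} {R : A → PDist A → Prop}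

@[simp] lemma scale_cons (α p : ℝ≥0) (a : A) (D : PDist A) :
    scale α ((p, a) :: D) = (α * p, a) :: scale α D := rfl

lemma FlipS.context {D E : PDist A} (h : FlipS D E) (L M : PDist A) :
    FlipS (L ++ D ++ M) (L ++ E ++ M) := by
  obtain ⟨E₁, E₂, p, q, a, b⟩ := h
  simpa using FlipS.mk (L ++ E₁) (E₂ ++ M) p q a b

lemma JoinS.context {D E : PDist A} (h : JoinS D E) (L M : PDist A) :
    JoinS (L ++ D ++ M) (L ++ E ++ M) := by
  obtain ⟨E₁, E₂, p, q, a⟩ := h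
  simpa using JoinS.mk (L ++ E₁) (E₂ ++ M) p q a

lemma SplitS.context {D E : PDist A} (h : SplitS D E) (L M : PDist A) :
    SplitS (L ++ D ++ M) (L ++ E ++ M) := by
  obtain ⟨E₁, E₂, p, q, a⟩ := h
  simpa using SplitS.mk (L ++ E₁) (E₂ ++ M) p q a

lemma fjs_context {D E : PDist A} (h : ReflTransGen FJ D E) (L M : PDist A) :
    ReflTransGen FJ (L ++ D ++ M) (L ++ E ++ M) :=
  h.lift (fun X => L ++ X ++ M) fun _ _ hFJ =>
    hFJ.imp (fun hF => hF.context L M) (fun hJ => hJ.context L M)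

lemma fjs_cons {D E : PDist A} (x : ℝ≥0 × A) (h : ReflTransGen FJ D E) :
    ReflTransGen FJ (x :: D) (x :: E) := by
  simpa using fjs_context h [x] []

lemma splits_cons {D E : PDist A} (x : ℝ≥0 × A) (h : ReflTransGen SplitS D E) :
    ReflTransGen SplitS (x :: D) (x :: E) := by
  simpa using h.lift (fun X => [x] ++ X ++ []) fun _ _ hS => hS.context [x] []

lemma fjs_append {L L' M M' : PDist A} (hL : ReflTransGen FJ L L')
    (hM : ReflTransGen FJ M M') : ReflTransGen FJ (L ++ M) (L' ++ M') :=
  have hL' : ReflTransGen FJ (L ++ M) (L' ++ M) := by simpa using fjs_context hL [] M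
  have hM' : ReflTransGen FJ (L' ++ M) (L' ++ M') := by simpa using fjs_context hM L' []
  hL'.trans hM'

lemma fjs_of_perm {L M : PDist A} (h : L.Perm M) : ReflTransGen FJ L M := by
  induction h with
  | nil => exact .refl
  | cons x _ ih => exact fjs_cons x ih
  | swap x y l => exact .single (Or.inl (by simpa using FlipS.mk [] l y.1 x.1 y.2 x.2))
  | trans _ _ ih₁ ih₂ => exact ih₁.trans ih₂

lemma fjs_scale_append_scale (p q : ℝ≥0) (C : PDist A) :
    ReflTransGen FJ (scale p C ++ scale q C) (scale (p + q) C) := by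
  induction C with
  | nil => exact .refl
  | cons x C ih =>
    obtain ⟨r, c⟩ := x
    have hbubble : ReflTransGen FJ (scale p ((r, c) :: C) ++ scale q ((r, c) :: C))
        ((p * r, c) :: (q * r, c) :: (scale p C ++ scale q C)) :=
      fjs_of_perm (List.perm_middle.cons _)
    have hjoin : FJ ((p * r, c) :: (q * r, c) :: (scale p C ++ scale q C))
        (((p + q) * r, c) :: (scale p C ++ scale q C)) :=
      Or.inr (by simpa [add_mul] using JoinS.mk [] (scale p C ++ scale q C) (p * r) (q * r) c)
    simpa using (hbubble.tail hjoin).trans (fjs_cons _ ih)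

lemma not_splitS_nil (N : PDist A) : ¬ SplitS [] N := by
  intro h
  generalize hD : ([] : PDist A) = D at h
  obtain ⟨E₁, E₂, p, q, a⟩ := h
  simp at hD

lemma SplitS.singleton_inv {x : ℝ≥0 × A} {N : PDist A} (h : SplitS [x] N) :
    ∃ s t, x.1 = s + t ∧ N = [(s, x.2), (t, x.2)] := by
  generalize hx : [x] = D at h
  obtain ⟨E₁, E₂, p, q, a⟩ := h
  rcases E₁ with _ | ⟨y, E₁⟩ <;> simp at hx
  obtain ⟨rfl, rfl⟩ := hx
  exact ⟨p, q, rfl, by simp⟩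

lemma SplitS.append_inv {L M N : PDist A} (h : SplitS (L ++ M) N) :
    (∃ L', SplitS L L' ∧ N = L' ++ M) ∨ (∃ M', SplitS M M' ∧ N = L ++ M') := by
  generalize hLM : L ++ M = D at h
  obtain ⟨E₁, E₂, p, q, a⟩ := h
  rw [List.append_assoc, List.singleton_append] at hLM
  rcases List.append_eq_append_iff.mp hLM with ⟨K, rfl, rfl⟩ | ⟨_ | ⟨y, K⟩, rfl, hK⟩
  · exact Or.inr ⟨K ++ [(p, a), (q, a)] ++ E₂, by simpa using SplitS.mk K E₂ p q a, by simp⟩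
  · obtain rfl := hK
    exact Or.inr ⟨[(p, a), (q, a)] ++ E₂, by simpa using SplitS.mk [] E₂ p q a, by simp⟩
  · obtain ⟨rfl, rfl⟩ := List.cons_eq_cons.mp hK
    exact Or.inl ⟨E₁ ++ [(p, a), (q, a)] ++ K, by simpa using SplitS.mk E₁ K p q a, by simp⟩

lemma splitS_postpone_of_local {l l' : PDist A}
    (hstep : ∀ E₁ E₂, FJ (E₁ ++ l ++ E₂) (E₁ ++ l' ++ E₂))
    (hlocal : ∀ N, SplitS l' N → ∃ d, SplitS l d ∧ ReflTransGen FJ d N)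
    {E₁ E₂ N : PDist A} (h : SplitS (E₁ ++ l' ++ E₂) N) :
    ∃ d, SplitS (E₁ ++ l ++ E₂) d ∧ ReflTransGen FJ d N := by
  rcases h.append_inv with ⟨L', hL', rfl⟩ | ⟨E₂', hE₂, rfl⟩
  · rcases hL'.append_inv with ⟨E₁', hE₁, rfl⟩ | ⟨l'', hl, rfl⟩
    · exact ⟨E₁' ++ l ++ E₂, by simpa using hE₁.context [] (l ++ E₂), .single (hstep E₁' E₂)⟩
    · obtain ⟨d, hd, hdN⟩ := hlocal l'' hl
      exact ⟨E₁ ++ d ++ E₂, hd.context E₁ E₂, fjs_context hdN E₁ E₂⟩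
  · exact ⟨E₁ ++ l ++ E₂', by simpa using hE₂.context (E₁ ++ l) [], .single (hstep E₁ E₂')⟩

lemma flip_splitS_postpone (p q : ℝ≥0) (a b : A) (N : PDist A)
    (h : SplitS [(q, b), (p, a)] N) :
    ∃ d, SplitS [(p, a), (q, b)] d ∧ ReflTransGen FJ d N := by
  rcases SplitS.append_inv (L := [(q, b)]) (M := [(p, a)]) h with
    ⟨L', hL', rfl⟩ | ⟨M', hM', rfl⟩
  · obtain ⟨s, t, rfl, rfl⟩ := hL'.singleton_inv
    exact ⟨[(p, a), (s, b), (t, b)], SplitS.mk [(p, a)] [] s t b,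
      fjs_of_perm (List.perm_append_comm (l₁ := [(p, a)]) (l₂ := [(s, b), (t, b)]))⟩
  · obtain ⟨s, t, rfl, rfl⟩ := hM'.singleton_inv
    exact ⟨[(s, a), (t, a), (q, b)], SplitS.mk [] [(q, b)] s t a,
      fjs_of_perm (List.perm_append_comm (l₁ := [(s, a), (t, a)]) (l₂ := [(q, b)]))⟩

lemma join_splitS_postpone (p q : ℝ≥0) (a : A) (N : PDist A) (h : SplitS [(p + q, a)] N) :
    ∃ d, SplitS [(p, a), (q, a)] d ∧ ReflTransGen FJ d N := by
  obtain ⟨s, t, hpq, rfl⟩ := h.singleton_inv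
  rcases exists_eq_add_and_eq_add_or_exists_eq_add_and_eq_add hpq with
    ⟨r, rfl, rfl⟩ | ⟨r, rfl, rfl⟩
  · exact ⟨[(s, a), (r, a), (q, a)], SplitS.mk [] [(q, a)] s r a,
      .single (Or.inr (JoinS.mk [(s, a)] [] r q a))⟩
  · exact ⟨[(p, a), (r, a), (t, a)], SplitS.mk [(p, a)] [] r t a,
      .single (Or.inr (JoinS.mk [] [(t, a)] p r a))⟩

lemma fj_splitS_postpone (D E N : PDist A) (hfj : FJ D E) (hs : SplitS E N) :
    ∃ d, SplitS D d ∧ ReflTransGen FJ d N := by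
  rcases hfj with ⟨E₁, E₂, p, q, a, b⟩ | ⟨E₁, E₂, p, q, a⟩
  · exact splitS_postpone_of_local (fun E₁ E₂ => Or.inl (.mk E₁ E₂ p q a b))
      (flip_splitS_postpone p q a b) hs
  · exact splitS_postpone_of_local (fun E₁ E₂ => Or.inr (.mk E₁ E₂ p q a))
      (join_splitS_postpone p q a) hs

lemma PEvol.append {L M E₁ E₂ : PDist A} (h₁ : PEvol R L E₁) (h₂ : PEvol R M E₂) :
    PEvol R (L ++ M) (E₁ ++ E₂) := by
  induction h₁ with
  | nil => simpa
  | keep p a _ ih => exact .keep p a ih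
  | evolve p hC _ ih => simpa using PEvol.evolve p hC ih

lemma PEvol.append_inv {L M E : PDist A} (h : PEvol R (L ++ M) E) :
    ∃ E₁ E₂, PEvol R L E₁ ∧ PEvol R M E₂ ∧ E = E₁ ++ E₂ := by
  induction L generalizing E with
  | nil => exact ⟨[], E, .nil, h, rfl⟩
  | cons x L ih =>
    obtain ⟨p, a⟩ := x
    cases h with
    | keep p a h =>
      obtain ⟨E₁, E₂, hL, hM, rfl⟩ := ih h
      exact ⟨(p, a) :: E₁, E₂, .keep p a hL, hM, rfl⟩
    | evolve p hC h =>
      obtain ⟨E₁, E₂, hL, hM, rfl⟩ := ih h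
      exact ⟨_ ++ E₁, E₂, .evolve p hC hL, hM, by simp⟩

lemma PEvol.singleton_inv {p : ℝ≥0} {a : A} {E : PDist A} (h : PEvol R [(p, a)] E) :
    E = [(p, a)] ∨ ∃ C, R a C ∧ E = scale p C := by
  rcases h with _ | ⟨_, _, h⟩ | ⟨_, hC, h⟩ <;> cases h
  · exact Or.inl rfl
  · exact Or.inr ⟨_, hC, by simp⟩

lemma pevol_postpone_of_local {l l' : PDist A}
    (hlocal : ∀ c, PEvol R l' c → ∃ d, PEvol R l d ∧ ReflTransGen FJ d c)
    {E₁ E₂ N : PDist A} (h : PEvol R (E₁ ++ l' ++ E₂) N) :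
    ∃ d, PEvol R (E₁ ++ l ++ E₂) d ∧ ReflTransGen FJ d N := by
  obtain ⟨N₁', N₂, h₁', h₂, rfl⟩ := h.append_inv
  obtain ⟨N₁, c, h₁, hc, rfl⟩ := h₁'.append_inv
  obtain ⟨d, hd, hdc⟩ := hlocal c hc
  exact ⟨N₁ ++ d ++ N₂, (h₁.append hd).append h₂, fjs_context hdc N₁ N₂⟩

lemma flip_pevol_postpone (p q : ℝ≥0) (a b : A) (c : PDist A)
    (h : PEvol R [(q, b), (p, a)] c) :
    ∃ d, PEvol R [(p, a), (q, b)] d ∧ ReflTransGen FJ d c := by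
  obtain ⟨B₁, B₂, h₁, h₂, rfl⟩ := PEvol.append_inv (L := [(q, b)]) (M := [(p, a)]) h
  exact ⟨B₂ ++ B₁, h₂.append h₁, fjs_of_perm List.perm_append_comm⟩

lemma join_pevol_postpone (p q : ℝ≥0) (a : A) (c : PDist A) (h : PEvol R [(p + q, a)] c) :
    ∃ d, PEvol R [(p, a), (q, a)] d ∧ ReflTransGen FJ d c := by
  rcases h.singleton_inv with rfl | ⟨C, hC, rfl⟩
  · exact ⟨[(p, a), (q, a)], .keep p a (.keep q a .nil),
      .single (Or.inr (JoinS.mk [] [] p q a))⟩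
  · exact ⟨scale p C ++ scale q C, by simpa using PEvol.evolve p hC (.evolve q hC .nil),
      fjs_scale_append_scale p q C⟩

lemma fj_pevol_postpone (D E N : PDist A) (hfj : FJ D E) (hp : PEvol R E N) :
    ∃ d, PEvol R D d ∧ ReflTransGen FJ d N := by
  rcases hfj with ⟨E₁, E₂, p, q, a, b⟩ | ⟨E₁, E₂, p, q, a⟩
  · exact pevol_postpone_of_local (flip_pevol_postpone p q a b) hp
  · exact pevol_postpone_of_local (join_pevol_postpone p q a) hp

lemma exists_fjs_of_splitS_scale {p : ℝ≥0} {C N : PDist A} (h : SplitS (scale p C) N) :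
    ∃ p₁ p₂, p = p₁ + p₂ ∧ ReflTransGen FJ (scale p₁ C ++ scale p₂ C) N := by
  generalize hC : scale p C = D at h
  obtain ⟨E₁, E₂, s, t, z⟩ := h
  rw [List.append_assoc, List.singleton_append] at hC
  obtain ⟨K₁, L, rfl, rfl, hL⟩ := List.map_eq_append_iff.mp hC
  obtain ⟨⟨r, z⟩, K₂, rfl, hx, rfl⟩ := List.map_eq_cons_iff.mp hL
  obtain ⟨hr, rfl⟩ := Prod.mk.inj hx
  obtain ⟨p₁, p₂, rfl, rfl, rfl⟩ := exists_add_of_mul_eq_add hr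
  refine ⟨p₁, p₂, rfl, ?_⟩
  have hmerge := (fjs_of_perm (List.append_cons_append_append_cons_perm (scale p₁ K₁)
    (scale p₂ K₁) (scale p₁ K₂) (scale p₂ K₂) (p₁ * r, z) (p₂ * r, z))).trans
    (fjs_append (fjs_scale_append_scale p₁ p₂ K₁)
      (fjs_cons _ (fjs_cons _ (fjs_scale_append_scale p₁ p₂ K₂))))
  simpa [scale] using hmerge

lemma pevol_splitS_postpone {D E N : PDist A} (hp : PEvol R D E) (hs : SplitS E N) :
    ∃ D₁ E₁, ReflTransGen SplitS D D₁ ∧ PEvol R D₁ E₁ ∧ ReflTransGen FJ E₁ N := by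
  induction hp generalizing N with
  | nil => exact (not_splitS_nil N hs).elim
  | @keep ds ds' p a hp ih =>
    rcases SplitS.append_inv (L := [(p, a)]) hs with ⟨L', hL', rfl⟩ | ⟨M', hM', rfl⟩
    · obtain ⟨s, t, rfl, rfl⟩ := hL'.singleton_inv
      exact ⟨(s, a) :: (t, a) :: ds, (s, a) :: (t, a) :: ds',
        .single (by simpa using SplitS.mk [] ds s t a), .keep s a (.keep t a hp), .refl⟩
    · obtain ⟨D₁, E₁, hS, hP, hFJ⟩ := ih hM'
      exact ⟨(p, a) :: D₁, (p, a) :: E₁, splits_cons _ hS, .keep p a hP, fjs_cons _ hFJ⟩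
  | @evolve a C ds ds' p hC hp ih =>
    rcases hs.append_inv with ⟨L', hL', rfl⟩ | ⟨M', hM', rfl⟩
    · obtain ⟨p₁, p₂, rfl, hFJ⟩ := exists_fjs_of_splitS_scale hL'
      exact ⟨(p₁, a) :: (p₂, a) :: ds, scale p₁ C ++ scale p₂ C ++ ds',
        .single (by simpa using SplitS.mk [] ds p₁ p₂ a),
        by simpa using PEvol.evolve p₁ hC (.evolve p₂ hC hp),
        by simpa using fjs_context hFJ [] ds'⟩
    · obtain ⟨D₁, E₁, hS, hP, hFJ⟩ := ih hM'
      exact ⟨(p, a) :: D₁, scale p C ++ E₁, splits_cons _ hS, .evolve p hC hP,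
        by simpa using fjs_context hFJ (scale p C) []⟩

lemma pevol_splits_postpone {D E N : PDist A} (hp : PEvol R D E)
    (hs : ReflTransGen SplitS E N) :
    ∃ D₁ E₁, ReflTransGen SplitS D D₁ ∧ PEvol R D₁ E₁ ∧ ReflTransGen FJ E₁ N := by
  induction hs with
  | refl => exact ⟨D, E, .refl, hp, .refl⟩
  | tail _ hstep ih =>
    obtain ⟨D₁, E₁, hS₁, hP₁, hFJ₁⟩ := ih
    obtain ⟨E₂, hs₂, hFJ₂⟩ := hFJ₁.postpone fj_splitS_postpone hstep
    obtain ⟨D₂, E₃, hS₂, hP₂, hFJ₃⟩ := pevol_splitS_postpone hP₁ hs₂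
    exact ⟨D₂, E₃, hS₁.trans hS₂, hP₂, hFJ₃.trans hFJ₂⟩

lemma DEquiv.exists_splits_fjs {D E : PDist A} (h : DEquiv D E) :
    ∃ M, ReflTransGen SplitS D M ∧ ReflTransGen FJ M E :=
  ReflTransGen.exists_of_or_of_postpone fj_splitS_postpone
    (ReflTransGen.mono (fun _ _ hstep => or_assoc.mpr hstep) _ _ h)

lemma dequiv_of_splits {D E : PDist A} (h : ReflTransGen SplitS D E) : DEquiv D E :=
  ReflTransGen.mono (fun _ _ hS => Or.inr (Or.inr hS)) _ _ h

lemma dequiv_of_fjs {D E : PDist A} (h : ReflTransGen FJ D E) : DEquiv D E :=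
  ReflTransGen.mono (fun _ _ hFJ => or_assoc.mp (Or.inl hFJ)) _ _ h

end PPARS

open PPARS Relation in
/-- One step of `⇒_P` modulo `≈` decomposes as splits, one parallel evolution, then
flips and joins: `≈ ∘ ⇒_P ∘ ≈  =  S* ∘ ⇒_P ∘ (FJ)*`. -/
theorem decomp_one {A : Type} (R : A → PDist A → Prop) (hR : IsPARS R) :
    ∀ D E : PDist A, ModE (PEvol R) D E ↔
      Relation.Comp (ReflTransGen SplitS)
        (Relation.Comp (PEvol R) (ReflTransGen FJ)) D E := by
  intro D E
  constructor
  · rintro ⟨M, hDM, N, hMN, hNE⟩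
    obtain ⟨M₁, hDM₁, hM₁M⟩ := hDM.exists_splits_fjs
    obtain ⟨N₁, hM₁N₁, hN₁N⟩ := hM₁M.postpone fj_pevol_postpone hMN
    obtain ⟨N₂, hNN₂, hN₂E⟩ := hNE.exists_splits_fjs
    obtain ⟨N₃, hN₁N₃, hN₃N₂⟩ := hN₁N.postpone_reflTransGen fj_splitS_postpone hNN₂
    obtain ⟨M₂, N₄, hM₁M₂, hM₂N₄, hN₄N₃⟩ := pevol_splits_postpone hM₁N₁ hN₁N₃
    exact ⟨M₂, hDM₁.trans hM₁M₂, N₄, hM₂N₄, hN₄N₃.trans (hN₃N₂.trans hN₂E)⟩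
  · rintro ⟨M, hDM, N, hMN, hNE⟩
    exact ⟨M, dequiv_of_splits hDM, N, hMN, dequiv_of_fjs hNE⟩
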